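/- Suppose the continued fraction of √(n²+j) (n positive integer, 1 ≤ j ≤ 2n) is [n; 1, 1, …, 1, 2n repeated] with exactly p ≥ 1 ones in the palindromic part. Then p+1 is not divisible by 3, and j = (2n·F_{p-1} + F_{p-2}) / F_p, where Fibonacci numbers are normalized by F₋₁ = 0, F₀ = 1, F_n = F_{n-1} + F_{n-2}. -/

import Mathlib

/-!
Let `x = √(n² + j)` with complete quotients `X_k`. For `k ≥ 1` each `X_k` is a reduced quadratic
irrational `(x + m) / d`, and the only reduced one with integer part `2n` is `x + n`; hence
`X_{p+1} = x + n`. The ones in between make `X₁ = [1; 1, …, 1, X_{p+1}]`, a Möbius transform of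
`X_{p+1}` with Fibonacci coefficients, and substituting into `x = n + 1 / X₁` and `x² = n² + j`
gives `j F_{p+1} = 2n F_p + F_{p-1}` (`Nat.fib` indexing). If `3 ∣ p + 1`, then `F_{p+1}` is
even and `F_{p-1}` odd, which is impossible.
-/

/-- The sequence of complete quotients of the continued fraction algorithm. -/
noncomputable def cfX (x : ℝ) : ℕ → ℝ
  | 0 => x
  | n + 1 =>
    if cfX x n - ⌊cfX x n⌋ = 0 then 0 else 1 / (cfX x n - ⌊cfX x n⌋)

/-- The partial quotients (continued fraction expansion) of a real number. -/
noncomputable def cfA (x : ℝ) (n : ℕ) : ℤ := ⌊cfX x n⌋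

/-- `fibP m` is the Fibonacci number `F_m` normalized by `F₋₁ = 0`, `F₀ = 1`,
so `F_m = Nat.fib (m+1)`; `fibP m` stands for `F_{m-1}` (i.e. `fibP 0 = F₋₁`). -/
def fibP (m : ℕ) : ℕ := Nat.fib m

@[simp]
theorem cfX_zero (x : ℝ) : cfX x 0 = x := rfl

theorem cfX_succ (x : ℝ) (k : ℕ) : cfX x (k + 1) = (Int.fract (cfX x k))⁻¹ := by
  rw [cfX, Int.fract]
  split_ifs with h
  · rw [h, inv_zero]
  · rw [one_div]

theorem Irrational.cfX {x : ℝ} (hx : Irrational x) (k : ℕ) : Irrational (cfX x k) := by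
  induction k with
  | zero => exact hx
  | succ k ih =>
    rw [cfX_succ, irrational_inv_iff, Int.fract]
    exact ih.sub_intCast _

theorem cfX_mul_cfX_succ {x : ℝ} (hx : Irrational x) (k : ℕ) :
    cfX x k * cfX x (k + 1) = cfA x k * cfX x (k + 1) + 1 := by
  have hfract : Int.fract (cfX x k) ≠ 0 := ((hx.cfX k).sub_intCast _).ne_zero
  rw [cfX_succ, cfA]
  nth_rw 1 [← Int.floor_add_fract (cfX x k)]
  field_simp

/-- `y = (x + m) / d` with integers `m, d` such that `d ∣ x² - m²`, and `y` is reduced: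
`y > 1` and its conjugate `(m - x) / d` lies in `(-1, 0)`. -/
def IsReducedQuotient (x y : ℝ) : Prop :=
  1 < y ∧ ∃ m d e : ℤ, y * d = x + m ∧ (d * e : ℝ) = x ^ 2 - m ^ 2 ∧ (m : ℝ) < x ∧ x < m + d

theorem one_lt_inv_fract {y : ℝ} (hy : Irrational y) : 1 < (Int.fract y)⁻¹ := by
  have hpos : 0 < Int.fract y := Int.fract_pos.2 (hy.ne_int _)
  exact (one_lt_inv₀ hpos).2 (Int.fract_lt_one y)

theorem IsReducedQuotient.inv_fract {x y : ℝ} (hx : Irrational x) (h : IsReducedQuotient x y) :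
    IsReducedQuotient x (Int.fract y)⁻¹ := by
  obtain ⟨hy1, m, d, e, hyd, hde, hmx, hxmd⟩ := h
  have hd : (0 : ℝ) < d := by linarith
  have hy : Irrational y := by
    rw [← eq_div_iff hd.ne'] at hyd
    exact hyd ▸ (hx.add_intCast m).div_intCast (by exact_mod_cast hd.ne')
  set a := ⌊y⌋
  have hya : (a : ℝ) < y := lt_of_le_of_ne (Int.floor_le y) (hy.ne_int a).symm
  have ha1 : (1 : ℝ) ≤ a := by exact_mod_cast Int.le_floor.2 (by exact_mod_cast hy1.le)
  have hfract : Int.fract y ≠ 0 := by rw [Int.fract]; linarith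
  -- `(fract y)⁻¹ = d / (x - m')` with `m' = a d - m`; rationalize using `x² - m'² = d d'`.
  refine ⟨one_lt_inv_fract hy, a * d - m, e + 2 * a * m - a ^ 2 * d, d, ?_, ?_, ?_, ?_⟩
  · rw [inv_mul_eq_iff_eq_mul₀ hfract, Int.fract]
    apply mul_left_cancel₀ hd.ne'
    push_cast
    linear_combination hde - (x + a * d - m) * hyd
  · push_cast
    linear_combination hde
  · push_cast
    nlinarith
  · have hu : 0 < x - (a * d - m) := by nlinarith
    have hdx : (d : ℝ) < x + (a * d - m) := by nlinarith
    have hprod : (e + 2 * a * m - a ^ 2 * d) * d = (x - (a * d - m)) * (x + (a * d - m)) := by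
      linear_combination hde
    have : (x - (a * d - m)) * d < (e + 2 * a * m - a ^ 2 * d) * d := by
      rw [hprod]
      exact mul_lt_mul_of_pos_left hdx hu
    push_cast
    linarith [lt_of_mul_lt_mul_right this hd.le]

theorem isReducedQuotient_inv_fract_sqrt {N : ℕ} (hN : ¬ IsSquare N) :
    IsReducedQuotient √N (Int.fract √N)⁻¹ := by
  have hx : Irrational √N := irrational_sqrt_natCast_iff.2 hN
  have hx2 : √N ^ 2 = N := Real.sq_sqrt (Nat.cast_nonneg N)
  have hx1 : 1 < √(N : ℝ) := by
    have : 1 < N := by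
      by_contra! h
      interval_cases N <;> simp at hN
    rw [Real.lt_sqrt zero_le_one]
    exact_mod_cast this
  set n := ⌊√(N : ℝ)⌋
  have hnx : (n : ℝ) < √N := lt_of_le_of_ne (Int.floor_le _) (hx.ne_int n).symm
  have hfract : Int.fract √(N : ℝ) ≠ 0 := by rw [Int.fract]; linarith
  refine ⟨one_lt_inv_fract hx, n, N - n ^ 2, 1, ?_, ?_, hnx, ?_⟩
  · rw [inv_mul_eq_iff_eq_mul₀ hfract, Int.fract]
    push_cast
    linear_combination -hx2
  · push_cast
    linear_combination -hx2
  · have hprod : (N - n ^ 2 : ℝ) = (√N - n) * (√N + n) := by linear_combination -hx2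
    have : (√N - n) * 1 < (N - n ^ 2 : ℝ) := by
      rw [hprod]
      exact mul_lt_mul_of_pos_left (by linarith [Int.lt_floor_add_one √(N : ℝ)]) (by linarith)
    push_cast
    linarith

theorem isReducedQuotient_cfX_sqrt {N : ℕ} (hN : ¬ IsSquare N) (k : ℕ) :
    IsReducedQuotient √N (cfX √N (k + 1)) := by
  induction k with
  | zero => exact cfX_succ _ 0 ▸ isReducedQuotient_inv_fract_sqrt hN
  | succ k ih =>
    rw [cfX_succ]
    exact ih.inv_fract (irrational_sqrt_natCast_iff.2 hN)

theorem IsReducedQuotient.eq_add_floor {x y : ℝ} (h : IsReducedQuotient x y) (hx : 0 < ⌊x⌋)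
    (hy : ⌊y⌋ = 2 * ⌊x⌋) : y = x + ⌊x⌋ := by
  obtain ⟨-, m, d, -, hyd, -, hmx, hxmd⟩ := h
  set n := ⌊x⌋
  have hn : (1 : ℝ) ≤ n := by exact_mod_cast hx
  have hxn : x < n + 1 := Int.lt_floor_add_one x
  have hny : (2 * n : ℝ) ≤ y := by exact_mod_cast hy ▸ Int.floor_le y
  have hyn : y < 2 * n + 1 := by exact_mod_cast hy ▸ Int.lt_floor_add_one y
  have hmn : m ≤ n := Int.lt_add_one_iff.1 (by exact_mod_cast hmx.trans hxn)
  have hd : d = 1 := by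
    have hd0 : 0 < d := by exact_mod_cast (by linarith : (0 : ℝ) < d)
    by_contra hd1
    have hd2 : (2 : ℝ) ≤ d := by exact_mod_cast (by omega : 2 ≤ d)
    have hmn' : (m : ℝ) ≤ n := by exact_mod_cast hmn
    nlinarith
  subst hd
  have hnm : n ≤ m := by
    have : (n : ℝ) - 1 < m := by push_cast at hyd; linarith
    exact Int.sub_one_lt_iff.1 (by exact_mod_cast this)
  rw [le_antisymm hmn hnm] at hyd
  simpa using hyd

theorem mul_fib_add_fib_eq_of_ones {R : Type*} [CommRing R] (X : ℕ → R) (k : ℕ)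
    (h : ∀ i ≤ k, X i * X (i + 1) = X (i + 1) + 1) :
    X 0 * (Nat.fib (k + 1) * X (k + 1) + Nat.fib k) =
      Nat.fib (k + 2) * X (k + 1) + Nat.fib (k + 1) := by
  induction k with
  | zero => simpa using h 0 le_rfl
  | succ k ih =>
    have hk := h (k + 1) le_rfl
    have ih := ih fun i hi ↦ h i (by omega)
    rw [Nat.fib_add_two (n := k + 1), Nat.fib_add_two (n := k)]
    rw [Nat.fib_add_two (n := k)] at ih
    push_cast at ih ⊢
    linear_combination
      X (k + 2) * ih - (X 0 * Nat.fib (k + 1) - Nat.fib (k + 1) - Nat.fib k) * hk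

theorem Nat.two_dvd_fib_iff : ∀ n, 2 ∣ Nat.fib n ↔ 3 ∣ n
  | 0 => by simp
  | 1 => by simp
  | 2 => by simp
  | n + 3 => by
    have h : Nat.fib (n + 3) = 2 * Nat.fib (n + 1) + Nat.fib n := by
      simp only [Nat.fib_add_two]; ring
    rw [h, Nat.dvd_add_right (dvd_mul_right 2 _), Nat.two_dvd_fib_iff n]
    omega

theorem not_three_dvd_of_mul_fib_eq {j n q : ℕ}
    (h : j * Nat.fib (q + 2) = 2 * n * Nat.fib (q + 1) + Nat.fib q) : ¬ 3 ∣ q + 2 := by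
  intro h3
  have heven : 2 ∣ j * Nat.fib (q + 2) := dvd_mul_of_dvd_right ((Nat.two_dvd_fib_iff _).2 h3) j
  have hodd : ¬ 2 ∣ Nat.fib q := by rw [Nat.two_dvd_fib_iff]; omega
  rw [h, mul_assoc] at heven
  omega

theorem sqrt_cf_all_ones_general (n j p : ℕ) (hn : 0 < n) (hj1 : 1 ≤ j) (hj2 : j ≤ 2 * n)
    (hp : 1 ≤ p)
    (h0 : cfA (Real.sqrt ((n : ℝ) ^ 2 + (j : ℝ))) 0 = n)
    (hones : ∀ i : ℕ, 1 ≤ i → i ≤ p → cfA (Real.sqrt ((n : ℝ) ^ 2 + (j : ℝ))) i = 1)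
    (hlast : cfA (Real.sqrt ((n : ℝ) ^ 2 + (j : ℝ))) (p + 1) = 2 * n) :
    ¬ (3 ∣ (p + 1)) ∧
      (j : ℚ) = (2 * (n : ℚ) * (fibP p : ℚ) + (fibP (p - 1) : ℚ)) / (fibP (p + 1) : ℚ) := by
  obtain ⟨q, rfl⟩ : ∃ q, p = q + 1 := ⟨p - 1, by omega⟩
  have hN : ¬ IsSquare (n ^ 2 + j) := by
    rintro ⟨t, ht⟩
    exact Nat.not_exists_sq (m := n) (by nlinarith) (by nlinarith) ⟨t, ht.symm⟩
  set x := √((n : ℝ) ^ 2 + j)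
  have hxN : x = √((n ^ 2 + j : ℕ) : ℝ) := by push_cast; rfl
  have hirr : Irrational x := hxN ▸ irrational_sqrt_natCast_iff.2 hN
  have hx2 : x ^ 2 = n ^ 2 + j := Real.sq_sqrt (by positivity)
  have hfloor : ⌊x⌋ = n := h0
  have hx1 : x * cfX x 1 = n * cfX x 1 + 1 := by
    simpa [h0] using cfX_mul_cfX_succ hirr 0
  have hlastX : cfX x (q + 2) = x + n := by
    have hred := hxN ▸ isReducedQuotient_cfX_sqrt hN (q + 1)
    simpa [hfloor] using hred.eq_add_floor (by omega) (by rw [hfloor]; exact hlast)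
  have hfib := mul_fib_add_fib_eq_of_ones (fun i ↦ cfX x (i + 1)) q fun i hi ↦ by
    simpa [hones (i + 1) (by omega) (by omega)] using cfX_mul_cfX_succ hirr (i + 1)
  have key : j * Nat.fib (q + 2) = 2 * n * Nat.fib (q + 1) + Nat.fib q := by
    simp only [hlastX, zero_add] at hfib
    have : (j * Nat.fib (q + 2) : ℝ) = 2 * n * Nat.fib (q + 1) + Nat.fib q := by
      linear_combination (Nat.fib (q + 1) * (x + n) + Nat.fib q) * hx1 - (x - n) * hfib
        - Nat.fib (q + 2) * hx2
    exact_mod_cast this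
  have keyQ : (j * Nat.fib (q + 2) : ℚ) = 2 * n * Nat.fib (q + 1) + Nat.fib q := by
    exact_mod_cast key
  refine ⟨not_three_dvd_of_mul_fib_eq key, ?_⟩
  rw [eq_div_iff (by simp [fibP])]
  simpa [fibP] using keyQ

/-- If the continued fraction of `√(n²+j)` is `[n; 1,…,1, 2n repeated]` with `p ≥ 1`
ones, then `3 ∤ p+1` and `j = (2n·F_{p-1} + F_{p-2})/F_p` (with `F₋₁ = 0`, `F₀ = 1`). -/
theorem sqrt_cf_all_ones (n j p : ℕ) (hn : 0 < n) (hj1 : 1 ≤ j) (hj2 : j ≤ 2 * n)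
    (hp : 1 ≤ p)
    (h0 : cfA (Real.sqrt ((n : ℝ) ^ 2 + (j : ℝ))) 0 = n)
    (hones : ∀ i : ℕ, 1 ≤ i → i ≤ p → cfA (Real.sqrt ((n : ℝ) ^ 2 + (j : ℝ))) i = 1)
    (hlast : cfA (Real.sqrt ((n : ℝ) ^ 2 + (j : ℝ))) (p + 1) = 2 * n)
    (hper : ∀ m : ℕ, 1 ≤ m → cfA (Real.sqrt ((n : ℝ) ^ 2 + (j : ℝ))) (m + (p + 1)) = cfA (Real.sqrt ((n : ℝ) ^ 2 + (j : ℝ))) m) :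
    ¬ (3 ∣ (p + 1)) ∧
      (j : ℚ) = (2 * (n : ℚ) * (fibP p : ℚ) + (fibP (p - 1) : ℚ)) / (fibP (p + 1) : ℚ) :=
  sqrt_cf_all_ones_general n j p hn hj1 hj2 hp h0 hones hlast
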